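/- arXiv:2306.13602 — 3 statements merged into one kernel-verified Lean document; each statement's English description precedes it below -/
import Mathlib

section
/- For all z, w in the closed unit disc of ℂ with z ≠ 0 and w ≠ 0, the quantity |1 − z·conj(w)| is comparable (with universal constants) to max{1 − |z|, 1 − |w|, |z/|z| − w/|w||}. That is, there exist constants c, C > 0 independent of z, w such that c·M ≤ |1 − z·conj(w)| ≤ C·M where M = max{1 − |z|, 1 − |w|, |z/|z| − w/|w||}. -/
/-!
Write `z = r u`, `w = s v` with `|u| = |v| = 1`. Then
`|1 - z w̄|² = (1 - r s)² + r s |u - v|²`, and `1 - r s` is comparable to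
`max (1 - r) (1 - s)`. Both terms are bounded by the maximum, and each of `1 - r s` and
`|u - v|` is bounded by `|1 - z w̄|`: the latter by a case split on the size of `r s`.
-/
open ComplexConjugate

namespace Complex

theorem norm_one_sub_mul_conj_sq (z w : ℂ) :
    ‖1 - z * conj w‖ ^ 2 =
      (1 - ‖z‖ * ‖w‖) ^ 2 + ‖z‖ * ‖w‖ * ‖z / (‖z‖ : ℂ) - w / (‖w‖ : ℂ)‖ ^ 2 := by
  rcases eq_or_ne z 0 with rfl | hz
  · simp
  rcases eq_or_ne w 0 with rfl | hw
  · simp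
  have hr : ‖z‖ ≠ 0 := norm_ne_zero_iff.mpr hz
  have hs : ‖w‖ ≠ 0 := norm_ne_zero_iff.mpr hw
  have hre : (z / ‖z‖ * conj (w / ‖w‖)).re = (z * conj w).re / (‖z‖ * ‖w‖) := by
    rw [map_div₀, conj_ofReal, div_mul_div_comm, ← ofReal_mul, div_ofReal_re]
  rw [Complex.sq_norm, Complex.sq_norm, normSq_sub, normSq_sub, hre]
  simp only [normSq_eq_norm_sq, norm_one, norm_mul, norm_conj, norm_div, norm_real, norm_norm,
    one_mul, conj_re]
  field_simp
  ring

theorem norm_div_norm_sub_div_norm_le_two (z w : ℂ) :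
    ‖z / (‖z‖ : ℂ) - w / (‖w‖ : ℂ)‖ ≤ 2 := by
  have h (u : ℂ) : ‖u / (‖u‖ : ℂ)‖ ≤ 1 := by
    rw [norm_div, norm_real, norm_norm]
    exact div_self_le_one _
  linarith [norm_sub_le (z / (‖z‖ : ℂ)) (w / (‖w‖ : ℂ)), h z, h w]

end Complex

section SqEq

variable {t B T : ℝ}

theorem one_sub_le_of_sq_eq (ht : 0 ≤ t) (hT : 0 ≤ T) (h : T ^ 2 = (1 - t) ^ 2 + t * B ^ 2) :
    1 - t ≤ T :=
  abs_le_of_sq_le_sq' (by nlinarith) hT |>.2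

theorem le_one_sub_add_of_sq_eq (ht1 : t ≤ 1) (hB : 0 ≤ B)
    (h : T ^ 2 = (1 - t) ^ 2 + t * B ^ 2) : T ≤ 1 - t + B :=
  le_of_sq_le_sq (by nlinarith) (by linarith)

/-- For `t ≥ 1 / 9` the term `t * B ^ 2` controls `B`; otherwise `T ≥ 1 - t > 8 / 9`. -/
theorem le_three_mul_of_sq_eq (ht : 0 ≤ t) (hB : B ≤ 2) (hT : 0 ≤ T)
    (h : T ^ 2 = (1 - t) ^ 2 + t * B ^ 2) : B ≤ 3 * T := by
  rcases le_or_gt (1 / 9) t with ht9 | ht9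
  · exact abs_le_of_sq_le_sq' (by nlinarith) (by positivity) |>.2
  · linarith [one_sub_le_of_sq_eq ht hT h]

end SqEq

theorem stmt_6 :
    ∃ c C : ℝ, 0 < c ∧ 0 < C ∧ ∀ z w : ℂ,
      ‖z‖ ≤ 1 → ‖w‖ ≤ 1 → z ≠ 0 → w ≠ 0 →
      c * max (max (1 - ‖z‖) (1 - ‖w‖))
            (‖z / (‖z‖ : ℂ) - w / (‖w‖ : ℂ)‖)
          ≤ ‖1 - z * (starRingEnd ℂ) w‖ ∧
      ‖1 - z * (starRingEnd ℂ) w‖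
          ≤ C * max (max (1 - ‖z‖) (1 - ‖w‖))
            (‖z / (‖z‖ : ℂ) - w / (‖w‖ : ℂ)‖) := by
  refine ⟨1 / 3, 3, by norm_num, by norm_num, fun z w hz hw _ _ => ?_⟩
  have key := Complex.norm_one_sub_mul_conj_sq z w
  have hr := norm_nonneg z
  have hs := norm_nonneg w
  have ht : 0 ≤ ‖z‖ * ‖w‖ := mul_nonneg hr hs
  have hT := norm_nonneg (1 - z * conj w)
  have hB := norm_nonneg (z / (‖z‖ : ℂ) - w / (‖w‖ : ℂ))
  have hB2 := Complex.norm_div_norm_sub_div_norm_le_two z w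
  have hrs : 1 - ‖z‖ * ‖w‖ ≤ 1 - ‖z‖ + (1 - ‖w‖) := by
    nlinarith [mul_nonneg hr (sub_nonneg.2 hw)]
  set M := max (max (1 - ‖z‖) (1 - ‖w‖)) ‖z / (‖z‖ : ℂ) - w / (‖w‖ : ℂ)‖
  have hzM : 1 - ‖z‖ ≤ M := le_max_of_le_left (le_max_left _ _)
  have hwM : 1 - ‖w‖ ≤ M := le_max_of_le_left (le_max_right _ _)
  have hBM : ‖z / (‖z‖ : ℂ) - w / (‖w‖ : ℂ)‖ ≤ M := le_max_right _ _
  constructor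
  · have hone := one_sub_le_of_sq_eq ht hT key
    have hzt : 1 - ‖z‖ ≤ 1 - ‖z‖ * ‖w‖ := by nlinarith
    have hwt : 1 - ‖w‖ ≤ 1 - ‖z‖ * ‖w‖ := by nlinarith
    have : M ≤ 3 * ‖1 - z * conj w‖ :=
      max_le (max_le (by linarith) (by linarith)) (le_three_mul_of_sq_eq ht hB2 hT key)
    linarith
  · linarith [le_one_sub_add_of_sq_eq (mul_le_one₀ hz hs hw) hB key]
end

section
/- There exists a universal constant C ≥ 0 such that for all t with 0 ≤ t ≤ π/2, all z ∈ ℂ with |z| < 1, and all natural numbers N with N ≥ 1/(2·(1 − |z|)^{1/2}), one has (1/N) · Σ_{l=0}^{⌊N/4⌋} 1/|1 − z·cos(t − 2πl/N)|² ≤ C / |1 − z|^{3/2}. -/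
open scoped Real

open Finset
set_option maxHeartbeats 1000000

lemma pointwise_bound (z : ℂ) (θ : ℝ) (hz : ‖z‖ < 1) (hθ : |θ| ≤ π/2) :
    (‖1-z‖)^2 + θ^4 ≤ 50 * (‖1 - z * (Real.cos θ : ℂ)‖)^2 := by
  have hπ : (3.141592:ℝ) < π := Real.pi_gt_d6
  have hπ' : π < 3.15 := Real.pi_lt_d2
  obtain ⟨hθ1, hθ2⟩ := abs_le.1 hθ
  set c := Real.cos θ with hc
  have hc0 : 0 ≤ c := Real.cos_nonneg_of_mem_Icc ⟨by linarith, hθ2⟩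
  have hc1 : c ≤ 1 := Real.cos_le_one θ
  have ha : z.re < 1 := lt_of_le_of_lt (Complex.re_le_norm z) hz
  have ha2 : z.re ^ 2 + z.im ^ 2 ≤ 1 := by
    have h := Complex.sq_norm z
    rw [Complex.normSq_apply] at h
    nlinarith [norm_nonneg z, hz]
  have h1 : (‖1 - z * (c:ℂ)‖)^2 = (1 - z.re*c)^2 + (z.im*c)^2 := by
    rw [Complex.sq_norm, Complex.normSq_apply]
    simp
    ring
  have h2 : (‖1-z‖)^2 = (1-z.re)^2 + z.im^2 := by
    rw [Complex.sq_norm, Complex.normSq_apply]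
    simp
    ring
  set R := (1 - z.re*c)^2 + (z.im*c)^2 with hR
  have key1 : c^2 * ((1-z.re)^2 + z.im^2) ≤ R := by
    have hprod : 0 ≤ (1-c)*(1+c-2*z.re*c) := by
      apply mul_nonneg (sub_nonneg.2 hc1)
      nlinarith
    nlinarith [hprod]
  have key2 : (1-c)^2 ≤ R := by
    have hz1 : z.re * c ≤ c := by nlinarith
    have hcross : 0 ≤ (c*(1-z.re)) * ((1-c) + (1 - z.re*c)) := by
      apply mul_nonneg (mul_nonneg hc0 (sub_nonneg.2 ha.le))
      nlinarith
    nlinarith [sq_nonneg (z.im*c)]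
  have hR0 : 0 ≤ R := by positivity
  rw [h1, h2]
  by_cases hhalf : 1/2 ≤ c
  · have hjordan : c ≤ 1 - 2/π^2 * θ^2 :=
      Real.cos_le_one_sub_mul_cos_sq (by rw [abs_le]; constructor <;> nlinarith)
    have h' : 2/π^2 * θ^2 ≤ 1 - c := by linarith
    have hθsq : θ^2 ≤ π^2/2 * (1-c) := by
      have h'' := mul_le_mul_of_nonneg_left h' (by positivity : (0:ℝ) ≤ π^2/2)
      have he : π^2/2 * (2/π^2 * θ^2) = θ^2 := by
        field_simp
      linarith
    have hθ4 : θ^4 ≤ (π^2/2 * (1-c))^2 := by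
      have := mul_self_le_mul_self (sq_nonneg θ) hθsq
      calc θ^4 = θ^2 * θ^2 := by ring
        _ ≤ (π^2/2*(1-c)) * (π^2/2*(1-c)) := this
        _ = (π^2/2 * (1-c))^2 := by ring
    have hπsq : π^2 ≤ 9.9225 := by nlinarith [Real.pi_pos]
    have hπ4 : (π^2/2)^2 ≤ 25 := by nlinarith [sq_nonneg π]
    have hθ4' : θ^4 ≤ 25 * (1-c)^2 := by
      calc θ^4 ≤ (π^2/2 * (1-c))^2 := hθ4
        _ = (π^2/2)^2 * (1-c)^2 := by ring
        _ ≤ 25 * (1-c)^2 := by nlinarith [sq_nonneg (1-c)]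
    have hA4 : (1-z.re)^2 + z.im^2 ≤ 4 * R := by
      have h4c : (1:ℝ) ≤ 4 * c^2 := by nlinarith
      nlinarith [add_nonneg (sq_nonneg (1-z.re)) (sq_nonneg z.im)]
    nlinarith
  · push_neg at hhalf
    have hRq : 1/4 ≤ R := by nlinarith
    have hA4 : (1-z.re)^2 + z.im^2 ≤ 4 := by nlinarith
    have hθsq : θ^2 ≤ 2.49 := by nlinarith
    have hθ4 : θ^4 ≤ 6.3 := by nlinarith [sq_nonneg θ]
    linarith

lemma reflect_sum (f : ℕ → ℝ) (hf : ∀ i, 0 ≤ f i) (n M : ℕ) (hn : n ≤ M) :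
    ∑ l ∈ range (M+1), f (if l ≤ n then n - l else l - (n+1)) ≤ 2 * ∑ d ∈ range (M+1), f d := by
  rw [range_eq_Ico, ← Finset.sum_Ico_consecutive _ (Nat.zero_le (n+1)) (by omega : n+1 ≤ M+1)]
  have e1 : ∑ l ∈ Ico 0 (n+1), f (if l ≤ n then n - l else l - (n+1)) = ∑ d ∈ range (n+1), f d := by
    rw [← range_eq_Ico, ← Finset.sum_range_reflect]
    apply Finset.sum_congr rfl
    intro i hi
    simp only [mem_range] at hi
    rw [if_pos (by omega)]
    congr 1
    omega
  have e2 : ∑ l ∈ Ico (n+1) (M+1), f (if l ≤ n then n - l else l - (n+1)) = ∑ d ∈ range (M-n), f d := by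
    rw [Finset.sum_Ico_eq_sum_range]
    apply Finset.sum_congr (by congr 1; omega)
    intro i hi
    rw [if_neg (by omega)]
    congr 1
    omega
  rw [e1, e2, two_mul, ← range_eq_Ico]
  have s1 : ∑ d ∈ range (n+1), f d ≤ ∑ d ∈ range (M+1), f d :=
    Finset.sum_le_sum_of_subset_of_nonneg (Finset.range_subset_range.2 (by omega)) (fun i _ _ => hf i)
  have s2 : ∑ d ∈ range (M-n), f d ≤ ∑ d ∈ range (M+1), f d :=
    Finset.sum_le_sum_of_subset_of_nonneg (Finset.range_subset_range.2 (by omega)) (fun i _ _ => hf i)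
  linarith

lemma tail_cubes (K : ℕ) (hK : 1 ≤ K) (M : ℕ) :
    ∑ d ∈ Ico (K+1) (M+1), (1:ℝ)/(d:ℝ)^4 ≤ 1/(K:ℝ)^3 := by
  rcases le_or_gt M K with h | h
  · rw [Finset.Ico_eq_empty (by omega)]
    simp
  · have main : ∀ m : ℕ, K ≤ m → ∑ d ∈ Ico (K+1) (m+1), (1:ℝ)/(d:ℝ)^4 ≤ 1/(K:ℝ)^3 - 1/(m:ℝ)^3 := by
      intro m hm
      induction m, hm using Nat.le_induction with
      | base => rw [Finset.Ico_eq_empty (by omega)]; simp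
      | succ m hm ih =>
        rw [Finset.sum_Ico_succ_top (by omega)]
        have hm1 : (1:ℝ) ≤ (m:ℝ) := by exact_mod_cast hK.trans hm
        have hstep : (1:ℝ)/((m:ℝ)+1)^4 ≤ 1/(m:ℝ)^3 - 1/((m:ℝ)+1)^3 := by
          rw [div_sub_div _ _ (by positivity) (by positivity), div_le_div_iff₀ (by positivity) (by positivity)]
          ring_nf
          have h0 : (0:ℝ) ≤ (m:ℝ) := by linarith
          nlinarith [pow_nonneg h0 3, pow_nonneg h0 4, pow_nonneg h0 5, pow_nonneg h0 6, h0, sq_nonneg (m:ℝ)]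
        push_cast
        linarith [ih]
    calc ∑ d ∈ Ico (K+1) (M+1), (1:ℝ)/(d:ℝ)^4 ≤ 1/(K:ℝ)^3 - 1/(M:ℝ)^3 := main M h.le
      _ ≤ 1/(K:ℝ)^3 := by
          have hM0 : (0:ℝ) < (M:ℝ) := by exact_mod_cast (by omega : 0 < M)
          have : (0:ℝ) ≤ 1/(M:ℝ)^3 := by positivity
          linarith

lemma sum_f_bound (s h : ℝ) (hs : 0 < s) (hh : 0 < h) (K M : ℕ) (hK : 1 ≤ K) :
    ∑ d ∈ range (M+1), 1/(s^4 + h^4*(d:ℝ)^4) ≤ ((K:ℝ)+1)/s^4 + (1/h^4)*(1/(K:ℝ)^3) := by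
  have hs4 : (0:ℝ) < s^4 := by positivity
  have hK0 : (0:ℝ) < (K:ℝ) := by exact_mod_cast hK
  set m := min (K+1) (M+1) with hm
  rw [range_eq_Ico, ← Finset.sum_Ico_consecutive _ (Nat.zero_le m) (by omega : m ≤ M+1)]
  have part1 : ∑ d ∈ Ico 0 m, 1/(s^4 + h^4*(d:ℝ)^4) ≤ ((K:ℝ)+1)/s^4 := by
    have each : ∀ d ∈ Ico 0 m, 1/(s^4 + h^4*(d:ℝ)^4) ≤ 1/s^4 := by
      intro d _
      apply one_div_le_one_div_of_le hs4
      nlinarith [pow_nonneg (mul_nonneg hh.le (Nat.cast_nonneg d : (0:ℝ) ≤ d)) 4, sq_nonneg ((h*d)^2)]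
    calc ∑ d ∈ Ico 0 m, 1/(s^4 + h^4*(d:ℝ)^4) ≤ ∑ _d ∈ Ico 0 m, 1/s^4 := Finset.sum_le_sum each
      _ = (m:ℝ) * (1/s^4) := by rw [Finset.sum_const]; simp
      _ ≤ ((K:ℝ)+1) * (1/s^4) := by
          have : (m:ℝ) ≤ (K:ℝ)+1 := by exact_mod_cast (by omega : m ≤ K+1)
          apply mul_le_mul_of_nonneg_right this (by positivity)
      _ = ((K:ℝ)+1)/s^4 := by ring
  have part2 : ∑ d ∈ Ico m (M+1), 1/(s^4 + h^4*(d:ℝ)^4) ≤ (1/h^4)*(1/(K:ℝ)^3) := by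
    rcases le_or_gt (K+1) (M+1) with hcase | hcase
    · have hmeq : m = K+1 := min_eq_left hcase
      rw [hmeq]
      have each : ∀ d ∈ Ico (K+1) (M+1), 1/(s^4 + h^4*(d:ℝ)^4) ≤ (1/h^4) * (1/(d:ℝ)^4) := by
        intro d hd
        simp only [Finset.mem_Ico] at hd
        have hd0 : (0:ℝ) < (d:ℝ) := by exact_mod_cast (by omega : 0 < d)
        rw [one_div_mul_one_div]
        apply one_div_le_one_div_of_le (by positivity)
        nlinarith
      calc ∑ d ∈ Ico (K+1) (M+1), 1/(s^4 + h^4*(d:ℝ)^4)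
          ≤ ∑ d ∈ Ico (K+1) (M+1), (1/h^4) * (1/(d:ℝ)^4) := Finset.sum_le_sum each
        _ = (1/h^4) * ∑ d ∈ Ico (K+1) (M+1), 1/(d:ℝ)^4 := by rw [Finset.mul_sum]
        _ ≤ (1/h^4) * (1/(K:ℝ)^3) := by
            apply mul_le_mul_of_nonneg_left (tail_cubes K hK M) (by positivity)
    · have hmeq : m = M+1 := min_eq_right (by omega)
      rw [hmeq, Finset.Ico_eq_empty (by omega)]
      simp
      positivity
  linarith

theorem stmt_11 :
    ∃ C : ℝ, 0 ≤ C ∧ ∀ (t : ℝ) (z : ℂ) (N : ℕ),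
      0 ≤ t → t ≤ π / 2 → ‖z‖ < 1 →
      (1 : ℝ) / (2 * Real.sqrt (1 - ‖z‖)) ≤ N →
      (1 / (N : ℝ)) * ∑ l ∈ Finset.range (N / 4 + 1),
          1 / (‖1 - z * (Real.cos (t - 2 * π * l / N) : ℂ)‖) ^ 2
        ≤ C / (‖1 - z‖) ^ ((3 : ℝ) / 2) := by
  refine ⟨450, by norm_num, ?_⟩
  intro t z N ht0 ht2 hz hN
  have hπ : (0:ℝ) < π := Real.pi_pos
  have hπ3 : (3:ℝ) < π := by linarith [Real.pi_gt_d6]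
  have hr : 0 < 1 - ‖z‖ := by linarith
  have hN0 : 0 < N := by
    rcases Nat.eq_zero_or_pos N with h0 | h; swap; · exact h
    exfalso
    rw [h0] at hN
    have hp : (0:ℝ) < 1 / (2 * Real.sqrt (1 - ‖z‖)) := by positivity
    simp only [Nat.cast_zero] at hN
    linarith
  have hN0' : (0:ℝ) < (N:ℝ) := by exact_mod_cast hN0
  have hz1 : (1:ℂ) - z ≠ 0 := by
    intro hcon
    have hz' : z = 1 := by linear_combination -hcon
    rw [hz'] at hz
    simp at hz
  set A := ‖1 - z‖ with hAdef
  have hA : 0 < A := norm_pos_iff.mpr hz1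
  have h1r : 1 - ‖z‖ ≤ A := by
    have := norm_sub_norm_le (1:ℂ) z
    simpa using this
  set s := Real.sqrt A with hsdef
  have hs0 : 0 < s := Real.sqrt_pos.2 hA
  have hs2 : s^2 = A := Real.sq_sqrt hA.le
  have h2Ns : (1:ℝ) ≤ 2*s*N := by
    rw [div_le_iff₀ (by positivity)] at hN
    have hle : Real.sqrt (1 - ‖z‖) ≤ s := Real.sqrt_le_sqrt h1r
    have h0 : 0 ≤ Real.sqrt (1 - ‖z‖) := Real.sqrt_nonneg _
    nlinarith
  have hsinv : 1/s ≤ 2*(N:ℝ) := by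
    rw [div_le_iff₀ hs0]
    nlinarith
  set M := N/4 with hMdef
  set b := 2*π/(N:ℝ) with hbdef
  have hb : 0 < b := by positivity
  set x := t*(N:ℝ)/(2*π) with hxdef
  have hx0 : 0 ≤ x := by positivity
  set n := ⌊x⌋₊ with hndef
  have hnx : (n:ℝ) ≤ x := Nat.floor_le hx0
  have hxn : x < (n:ℝ) + 1 := Nat.lt_floor_add_one x
  have hnM : n ≤ M := by
    have hxle : x ≤ (N:ℝ)/4 := by
      rw [hxdef, div_le_div_iff₀ (by positivity) (by norm_num)]
      nlinarith
    have h4n : (4*n:ℝ) ≤ (N:ℝ) := by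
      have := hnx.trans hxle
      linarith
    have h4n' : 4*n ≤ N := by exact_mod_cast h4n
    omega
  set y := (N:ℝ)*s/(2*π) with hydef
  have hy0 : 0 < y := by positivity
  set K := ⌊y⌋₊ + 1 with hKdef
  have hK1 : 1 ≤ K := by omega
  have hyK : y < (K:ℝ) := by
    rw [hKdef]
    push_cast
    exact Nat.lt_floor_add_one y
  have hKy : (K:ℝ) ≤ y + 1 := by
    rw [hKdef]
    push_cast
    have := Nat.floor_le hy0.le
    linarith
  -- per-term bound
  have hterm : ∀ l ∈ Finset.range (M+1),
      1 / (‖1 - z * (Real.cos (t - 2 * π * l / N) : ℂ)‖) ^ 2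
        ≤ 50 * (1/(s^4 + b^4 * (((if l ≤ n then n - l else l - (n+1)) : ℕ):ℝ)^4)) := by
    intro l hl
    simp only [Finset.mem_range] at hl
    have hlM : l ≤ M := by omega
    have hl4 : 4*l ≤ N := by omega
    have hl4' : 4*(l:ℝ) ≤ (N:ℝ) := by exact_mod_cast hl4
    have hθeq : t - 2*π*l/N = b*(x - l) := by
      rw [hbdef, hxdef]
      field_simp
    have hfrac1 : (0:ℝ) ≤ 2*π*l/N := by positivity
    have hfrac2 : 2*π*(l:ℝ)/N ≤ π/2 := by
      rw [div_le_div_iff₀ hN0' (by norm_num)]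
      nlinarith
    have hθabs : |t - 2*π*(l:ℝ)/N| ≤ π/2 := by
      rw [abs_le]
      constructor <;> linarith
    have hpb := pointwise_bound z (t - 2*π*l/N) hz hθabs
    set d : ℕ := if l ≤ n then n - l else l - (n+1) with hddef
    have hd4 : ((d:ℕ):ℝ)^4 ≤ (x - (l:ℝ))^4 := by
      rw [hddef]
      split_ifs with hln
      · have hc1 : ((n - l : ℕ):ℝ) = (n:ℝ) - l := by
          push_cast [hln]
          ring
        have hc3 : (0:ℝ) ≤ (n:ℝ) - l := by
          have : (l:ℝ) ≤ (n:ℝ) := by exact_mod_cast hln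
          linarith
        rw [hc1]
        exact pow_le_pow_left₀ hc3 (by linarith) 4
      · push_neg at hln
        have hc1 : ((l - (n+1) : ℕ):ℝ) = (l:ℝ) - ((n:ℝ)+1) := by
          push_cast [(by omega : n+1 ≤ l)]
          ring
        have hc3 : (0:ℝ) ≤ (l:ℝ) - ((n:ℝ)+1) := by
          have : ((n:ℝ)+1) ≤ (l:ℝ) := by exact_mod_cast (by omega : n+1 ≤ l)
          linarith
        rw [hc1]
        calc ((l:ℝ) - ((n:ℝ)+1))^4 ≤ ((l:ℝ) - x)^4 := pow_le_pow_left₀ hc3 (by linarith) 4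
          _ = (x - (l:ℝ))^4 := by ring
    have hden : s^4 + b^4*((d:ℕ):ℝ)^4 ≤ A^2 + (t - 2*π*l/N)^4 := by
      have e1 : s^4 = A^2 := by rw [← hs2]; ring
      have e2 : b^4*((d:ℕ):ℝ)^4 ≤ (t - 2*π*l/N)^4 := by
        rw [hθeq]
        calc b^4*((d:ℕ):ℝ)^4 ≤ b^4*(x - (l:ℝ))^4 :=
              mul_le_mul_of_nonneg_left hd4 (by positivity)
          _ = (b*(x - (l:ℝ)))^4 := by ring
      linarith
    have hdenpos : (0:ℝ) < s^4 + b^4*((d:ℕ):ℝ)^4 := by positivity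
    have hRpos : 0 < (‖1 - z * (Real.cos (t - 2*π*l/N) : ℂ)‖)^2 := by
      nlinarith [pow_pos hA 2, pow_le_pow_left₀ (abs_nonneg (t - 2*π*(l:ℝ)/N)) (le_refl |t - 2*π*(l:ℝ)/N|) 1, sq_nonneg ((t - 2*π*(l:ℝ)/N)^2)]
    rw [mul_one_div, div_le_div_iff₀ hRpos hdenpos]
    nlinarith [sq_nonneg ((t - 2*π*(l:ℝ)/N)^2)]
  -- sum chain
  set f : ℕ → ℝ := fun d => 1/(s^4 + b^4*(d:ℝ)^4) with hfdef
  have hf0 : ∀ i, 0 ≤ f i := by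
    intro i
    rw [hfdef]
    positivity
  have hsum1 : ∑ l ∈ Finset.range (M+1),
      1 / (‖1 - z * (Real.cos (t - 2 * π * l / N) : ℂ)‖) ^ 2
        ≤ 100 * (((K:ℝ)+1)/s^4 + (1/b^4)*(1/(K:ℝ)^3)) := by
    calc ∑ l ∈ Finset.range (M+1),
        1 / (‖1 - z * (Real.cos (t - 2 * π * l / N) : ℂ)‖) ^ 2
        ≤ ∑ l ∈ Finset.range (M+1), 50 * f (if l ≤ n then n - l else l - (n+1)) :=
          Finset.sum_le_sum hterm
      _ = 50 * ∑ l ∈ Finset.range (M+1), f (if l ≤ n then n - l else l - (n+1)) := by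
          rw [Finset.mul_sum]
      _ ≤ 50 * (2 * ∑ d ∈ Finset.range (M+1), f d) := by
          have := reflect_sum f hf0 n M hnM
          linarith
      _ = 100 * ∑ d ∈ Finset.range (M+1), f d := by ring
      _ ≤ 100 * (((K:ℝ)+1)/s^4 + (1/b^4)*(1/(K:ℝ)^3)) := by
          have := sum_f_bound s b hs0 hb K M hK1
          linarith
  -- numeric finish
  have hb4 : (1/b^4)*(1/y^3) = (N:ℝ)/(2*π)*(1/s^3) := by
    rw [hbdef, hydef]
    field_simp
  have hKcube : 1/(K:ℝ)^3 ≤ 1/y^3 := by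
    apply one_div_le_one_div_of_le (by positivity)
    exact pow_le_pow_left₀ hy0.le hyK.le 3
  have hbd2 : (1/b^4)*(1/(K:ℝ)^3) ≤ (N:ℝ)/(2*π)*(1/s^3) := by
    rw [← hb4]
    apply mul_le_mul_of_nonneg_left hKcube (by positivity)
  have hbd1 : ((K:ℝ)+1)/s^4 ≤ (N:ℝ)/(2*π)*(1/s^3) + 2/s^4 := by
    have e : ((N:ℝ)*s/(2*π) + 2)/s^4 = (N:ℝ)/(2*π)*(1/s^3) + 2/s^4 := by
      field_simp
    calc ((K:ℝ)+1)/s^4 ≤ ((N:ℝ)*s/(2*π) + 2)/s^4 := by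
          apply div_le_div_of_nonneg_right ?_ (by positivity)
          · rw [hydef] at hKy; linarith
      _ = (N:ℝ)/(2*π)*(1/s^3) + 2/s^4 := e
  have hbd3 : 2/s^4 ≤ 4*(N:ℝ)/s^3 := by
    rw [div_le_div_iff₀ (by positivity) (by positivity)]
    nlinarith [pow_pos hs0 3, pow_pos hs0 4]
  have hsum2 : ∑ l ∈ Finset.range (M+1),
      1 / (‖1 - z * (Real.cos (t - 2 * π * l / N) : ℂ)‖) ^ 2
        ≤ 100 * (2*((N:ℝ)/(2*π)*(1/s^3)) + 4*(N:ℝ)/s^3) := by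
    calc _ ≤ 100 * (((K:ℝ)+1)/s^4 + (1/b^4)*(1/(K:ℝ)^3)) := hsum1
      _ ≤ 100 * (2*((N:ℝ)/(2*π)*(1/s^3)) + 4*(N:ℝ)/s^3) := by linarith
  have hA32 : A ^ ((3:ℝ)/2) = s^3 := by
    have h32 : ((3:ℝ)/2) = (1/2 : ℝ) * ((3:ℕ):ℝ) := by norm_num
    rw [h32, Real.rpow_mul hA.le, Real.rpow_natCast, ← Real.sqrt_eq_rpow]
  rw [hA32]
  calc (1/(N:ℝ)) * ∑ l ∈ Finset.range (M+1),
      1 / (‖1 - z * (Real.cos (t - 2 * π * l / N) : ℂ)‖) ^ 2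
      ≤ (1/(N:ℝ)) * (100 * (2*((N:ℝ)/(2*π)*(1/s^3)) + 4*(N:ℝ)/s^3)) := by
        apply mul_le_mul_of_nonneg_left hsum2 (by positivity)
    _ = (100/π + 400) * (1/s^3) := by
        field_simp
        ring
    _ ≤ 450 / s^3 := by
        have : 100/π ≤ 100/3 := by
          apply div_le_div_of_nonneg_left (by norm_num) (by norm_num) hπ3.le
        rw [div_eq_mul_one_div 450 (s^3)]
        have h1s : 0 ≤ 1/s^3 := by positivity
        nlinarith
end

section
/- Let z ∈ ℂ with |z| < 1, let N ≥ 2 be an integer with N ≤ 1/(1 − |z|)^{1/2}, and define G_{nj} = (1 − |z|)/(1 − |z|·cos(2π(n−j)/N)) for 0 ≤ n, j ≤ N−1. Then there is a universal constant C such that Σ_{n=1}^{N−1} |G_{n0}|² ≤ C, i.e. the off-diagonal ℓ² column norms of the matrix G are bounded independently of z and N. -/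
/-!
Write `r = ‖z‖` and `t = n / N`. Since `1 - r cos θ ≥ (1 - cos θ) / 2` and, by Jordan's inequality,
`1 - cos (2πt) = 2 sin² (πt) ≥ 8 min(t, 1 - t)²`, the `n`-th entry is at most
`(1 - r) N² (1/n² + 1/(N - n)²) / 4 ≤ (1/n² + 1/(N - n)²) / 4`, using `N² (1 - r) ≤ 1`.
The entries lie in `[0, 1]`, so their squares obey the same bound, and
`∑ 1/n² ≤ 2` gives `C = 1`.
-/

open Real Finset

lemma one_sub_cos_le_two_mul_one_sub_mul_cos {r : ℝ} (hr0 : 0 ≤ r) (hr1 : r ≤ 1) (θ : ℝ) :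
    1 - cos θ ≤ 2 * (1 - r * cos θ) := by
  nlinarith [cos_le_one θ, neg_one_le_cos θ]

lemma one_sub_div_one_sub_mul_cos_le {r θ : ℝ} (hr0 : 0 ≤ r) (hr1 : r ≤ 1)
    (hθ : 0 < 1 - cos θ) :
    (1 - r) / (1 - r * cos θ) ≤ 2 * (1 - r) / (1 - cos θ) := by
  have hD := one_sub_cos_le_two_mul_one_sub_mul_cos hr0 hr1 θ
  rw [div_le_div_iff₀ (by linarith) hθ]
  nlinarith

lemma two_mul_le_sin_pi_mul {t : ℝ} (h0 : 0 ≤ t) (h1 : t ≤ 1 / 2) : 2 * t ≤ sin (π * t) := by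
  have h := mul_le_sin (x := π * t) (by positivity) (by nlinarith [pi_pos])
  rwa [← mul_assoc, div_mul_cancel₀ _ pi_ne_zero] at h

lemma two_mul_min_le_sin_pi_mul {t : ℝ} (h0 : 0 ≤ t) (h1 : t ≤ 1) :
    2 * min t (1 - t) ≤ sin (π * t) := by
  rcases le_total t (1 - t) with h | h
  · rw [min_eq_left h]
    exact two_mul_le_sin_pi_mul h0 (by linarith)
  · rw [min_eq_right h, ← sin_pi_sub, ← mul_one_sub]
    exact two_mul_le_sin_pi_mul (by linarith) (by linarith)

lemma eight_mul_min_sq_le_one_sub_cos {t : ℝ} (h0 : 0 ≤ t) (h1 : t ≤ 1) :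
    8 * min t (1 - t) ^ 2 ≤ 1 - cos (2 * π * t) := by
  have hsin := two_mul_min_le_sin_pi_mul h0 h1
  have hmin : 0 ≤ min t (1 - t) := le_min h0 (by linarith)
  rw [mul_assoc, cos_two_mul_eq_one_sub]
  nlinarith

lemma inv_min_sq_le {a b : ℝ} (ha : 0 < a) (hb : 0 < b) :
    (min a b ^ 2)⁻¹ ≤ (a ^ 2)⁻¹ + (b ^ 2)⁻¹ := by
  rcases min_choice a b with h | h <;> rw [h]
  · exact le_add_of_nonneg_right (by positivity)
  · exact le_add_of_nonneg_left (by positivity)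

lemma one_sub_div_one_sub_mul_cos_two_pi_mul_le {r t : ℝ} (hr0 : 0 ≤ r) (hr1 : r ≤ 1)
    (ht0 : 0 < t) (ht1 : t < 1) :
    (1 - r) / (1 - r * cos (2 * π * t)) ≤ (1 - r) / 4 * ((t ^ 2)⁻¹ + ((1 - t) ^ 2)⁻¹) := by
  have hm : 0 < min t (1 - t) := lt_min ht0 (sub_pos.2 ht1)
  have hcos := eight_mul_min_sq_le_one_sub_cos ht0.le ht1.le
  calc (1 - r) / (1 - r * cos (2 * π * t))
      ≤ 2 * (1 - r) / (1 - cos (2 * π * t)) :=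
        one_sub_div_one_sub_mul_cos_le hr0 hr1 (lt_of_lt_of_le (by positivity) hcos)
    _ ≤ 2 * (1 - r) / (8 * min t (1 - t) ^ 2) :=
        div_le_div_of_nonneg_left (by linarith) (by positivity) hcos
    _ = (1 - r) / 4 * (min t (1 - t) ^ 2)⁻¹ := by field_simp; ring
    _ ≤ (1 - r) / 4 * ((t ^ 2)⁻¹ + ((1 - t) ^ 2)⁻¹) :=
        mul_le_mul_of_nonneg_left (inv_min_sq_le ht0 (sub_pos.2 ht1)) (by linarith)

lemma sq_one_sub_div_one_sub_mul_cos_le {r : ℝ} {n N : ℕ} (hr0 : 0 ≤ r) (hr1 : r < 1)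
    (hn : n ∈ Ico 1 N) (hNr : (N : ℝ) ^ 2 * (1 - r) ≤ 1) :
    ((1 - r) / (1 - r * cos (2 * π * n / N))) ^ 2
      ≤ (((n : ℝ) ^ 2)⁻¹ + (((N : ℝ) - n) ^ 2)⁻¹) / 4 := by
  obtain ⟨hn1, hnN⟩ := mem_Ico.1 hn
  have hn0 : (0 : ℝ) < n := by exact_mod_cast hn1
  have hnN' : (n : ℝ) < N := by exact_mod_cast hnN
  have hN0 : (0 : ℝ) < N := hn0.trans hnN'
  have hD : 1 - r ≤ 1 - r * cos (2 * π * n / N) := by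
    nlinarith [cos_le_one (2 * π * n / N)]
  have hx0 : 0 ≤ (1 - r) / (1 - r * cos (2 * π * n / N)) :=
    div_nonneg (by linarith) (by linarith)
  have hx1 : (1 - r) / (1 - r * cos (2 * π * n / N)) ≤ 1 := div_le_one_of_le₀ hD (by linarith)
  have hbound := one_sub_div_one_sub_mul_cos_two_pi_mul_le hr0 hr1.le
    (div_pos hn0 hN0) ((div_lt_one hN0).2 hnN')
  rw [← mul_div_assoc] at hbound
  have hrescale : ((n / N : ℝ) ^ 2)⁻¹ + ((1 - n / N : ℝ) ^ 2)⁻¹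
      = N ^ 2 * (((n : ℝ) ^ 2)⁻¹ + (((N : ℝ) - n) ^ 2)⁻¹) := by
    have : (N : ℝ) - n ≠ 0 := sub_ne_zero.2 hnN'.ne'
    field_simp
  have hS : 0 ≤ ((n : ℝ) ^ 2)⁻¹ + (((N : ℝ) - n) ^ 2)⁻¹ := by positivity
  rw [hrescale] at hbound
  calc ((1 - r) / (1 - r * cos (2 * π * n / N))) ^ 2
      ≤ (1 - r) / (1 - r * cos (2 * π * n / N)) := by nlinarith
    _ ≤ (1 - r) / 4 * (N ^ 2 * (((n : ℝ) ^ 2)⁻¹ + (((N : ℝ) - n) ^ 2)⁻¹)) := hbound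
    _ ≤ (((n : ℝ) ^ 2)⁻¹ + (((N : ℝ) - n) ^ 2)⁻¹) / 4 := by nlinarith

lemma sum_Ico_inv_sq_add_inv_sq_sub_le (N : ℕ) :
    ∑ n ∈ Ico 1 N, (((n : ℝ) ^ 2)⁻¹ + (((N : ℝ) - n) ^ 2)⁻¹) ≤ 4 := by
  have hhalf : ∑ n ∈ Ico 1 N, ((n : ℝ) ^ 2)⁻¹ ≤ 2 := by
    have h := sum_Ioo_inv_sq_le (α := ℝ) 0 N
    rw [← Ico_add_one_left_eq_Ioo] at h
    simpa using h
  have hreflect : ∑ n ∈ Ico 1 N, (((N : ℝ) - n) ^ 2)⁻¹ = ∑ n ∈ Ico 1 N, ((n : ℝ) ^ 2)⁻¹ := by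
    calc ∑ n ∈ Ico 1 N, (((N : ℝ) - n) ^ 2)⁻¹
        = ∑ n ∈ Ico 1 N, (((N - n : ℕ) : ℝ) ^ 2)⁻¹ :=
          sum_congr rfl fun n hn => by rw [Nat.cast_sub (mem_Ico.1 hn).2.le]
      _ = ∑ n ∈ Ico (N + 1 - N) (N + 1 - 1), ((n : ℝ) ^ 2)⁻¹ :=
          sum_Ico_reflect (fun n => ((n : ℝ) ^ 2)⁻¹) 1 (Nat.le_succ N)
      _ = ∑ n ∈ Ico 1 N, ((n : ℝ) ^ 2)⁻¹ := by rw [Nat.add_sub_cancel_left, Nat.add_sub_cancel]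
  rw [sum_add_distrib, hreflect]
  linarith

lemma sq_mul_le_one_of_le_one_div_sqrt {x ε : ℝ} (hx : 0 ≤ x) (hε : 0 < ε) (h : x ≤ 1 / √ε) :
    x ^ 2 * ε ≤ 1 := by
  calc x ^ 2 * ε ≤ (1 / √ε) ^ 2 * ε := by gcongr
    _ = 1 := by rw [div_pow, sq_sqrt hε.le]; field_simp

theorem stmt_17 :
    ∃ C : ℝ, ∀ (z : ℂ) (N : ℕ), ‖z‖ < 1 → 2 ≤ N →
      (N : ℝ) ≤ 1 / Real.sqrt (1 - ‖z‖) →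
      ∑ n ∈ Finset.Ico 1 N,
          ((1 - ‖z‖) / (1 - ‖z‖ * Real.cos (2 * π * n / N))) ^ 2
        ≤ C := by
  refine ⟨1, fun z N hz _ hNz => ?_⟩
  have hNr : (N : ℝ) ^ 2 * (1 - ‖z‖) ≤ 1 :=
    sq_mul_le_one_of_le_one_div_sqrt N.cast_nonneg (sub_pos.2 hz) hNz
  calc ∑ n ∈ Ico 1 N, ((1 - ‖z‖) / (1 - ‖z‖ * cos (2 * π * n / N))) ^ 2
      ≤ ∑ n ∈ Ico 1 N, (((n : ℝ) ^ 2)⁻¹ + (((N : ℝ) - n) ^ 2)⁻¹) / 4 :=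
        sum_le_sum fun n hn => sq_one_sub_div_one_sub_mul_cos_le (norm_nonneg z) hz hn hNr
    _ ≤ 1 := by
        rw [← sum_div]
        linarith [sum_Ico_inv_sq_add_inv_sq_sub_le N]
end
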